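/- Let a, b ∈ G∖N with d(a*, b*) > 4 and N(a) ⊆ N(b). Then: (1) if 1 ∈ N(a), then 1 ∈ N(b) and −1 ∈ N(b); (2) for every n ∈ N∖N(b), one has N(a) ⊆ N(a + n), −N(a) ⊆ N(b + n), and N(a) ⊆ N(b + n). -/

import Mathlib

open scoped Pointwise

/-- The subset of `D` consisting of (the values of) the units belonging to `N`. -/
def unitsSet {D : Type*} [DivisionRing D] (N : Subgroup Dˣ) : Set D :=
  Units.val '' (N : Set Dˣ)

/-- For `a : D`, the set `N(a) = {n ∈ N : a + n ∈ N}`. -/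
def nSet {D : Type*} [DivisionRing D] (N : Subgroup Dˣ) (a : D) : Set D :=
  {x : D | x ∈ unitsSet N ∧ a + x ∈ unitsSet N}

/-- The commuting graph of a group: vertices are the nonidentity elements,
two distinct nonidentity elements are adjacent iff they commute. (The identity is
an isolated vertex.) -/
def commGraph (Q : Type*) [Group Q] : SimpleGraph Q where
  Adj a b := a ≠ b ∧ a ≠ 1 ∧ b ≠ 1 ∧ a * b = b * a
  symm := by
    constructor
    intro a b h
    exact ⟨Ne.symm h.1, h.2.2.1, h.2.1, h.2.2.2.symm⟩
  loopless := by constructor; intro a h; exact h.1 rfl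

/-- `distGT Γ u v k` : there is no path (walk) of length at most `k` from `u` to `v`,
i.e. `d(u,v) > k`. -/
def distGT {Q : Type*} (Γ : SimpleGraph Q) (u v : Q) (k : ℕ) : Prop :=
  ∀ p : Γ.Walk u v, k < p.length


/-!
If `x - y ∈ N` for nonzero `x, y`, then `x*` and `y*` commute in `G*`. Hence an element
`c ∉ N` with `c - a ∈ N` and `b - c ∈ N` is a common neighbour of `a*` and `b*`, and
more generally a chain `a, c₁, c₂, c₃, b` of elements outside `N` whose consecutive
differences lie in `N` gives a walk of length at most four from `a*` to `b*`. Each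
membership claimed is proved by contradiction: were it to fail, the element in question
would sit on such a chain, built from `N(a) ⊆ N(b)` (which gives `b - a - m ∈ N` for
`m ∈ N(a)`) and `−1 ∈ F ⊆ N`.
-/

section UnitsSet

variable {D : Type*} [DivisionRing D] (N : Subgroup Dˣ)

theorem coe_mem_unitsSet_iff {x : Dˣ} : (x : D) ∈ unitsSet N ↔ x ∈ N :=
  ⟨fun ⟨_, hu, he⟩ => Units.ext he ▸ hu, fun h => ⟨x, h, rfl⟩⟩

theorem neg_one_mem_of_forall_center_mem
    (hF : ∀ x : Dˣ, (x : D) ∈ Set.center D → x ∈ N) : (-1 : Dˣ) ∈ N :=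
  hF _ (by simp [Set.neg_mem_center, Set.one_mem_center])

variable {N}

theorem neg_mem_unitsSet (hneg : (-1 : Dˣ) ∈ N) {x : D} (h : x ∈ unitsSet N) :
    -x ∈ unitsSet N := by
  obtain ⟨u, hu, rfl⟩ := h
  exact ⟨-1 * u, N.mul_mem hneg hu, by simp⟩

theorem neg_mem_unitsSet_iff (hneg : (-1 : Dˣ) ∈ N) {x : D} :
    -x ∈ unitsSet N ↔ x ∈ unitsSet N :=
  ⟨fun h => by simpa using neg_mem_unitsSet hneg h, neg_mem_unitsSet hneg⟩

theorem sub_sub_mem_of_mem_nSet (hneg : (-1 : Dˣ) ∈ N) {a b m : D}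
    (hsub : nSet N a ⊆ nSet N b) (hm : m ∈ nSet N a) : b - a - m ∈ unitsSet N := by
  have h := (hsub ⟨neg_mem_unitsSet hneg hm.2, by simpa using neg_mem_unitsSet hneg hm.1⟩).2
  convert h using 1
  abel

end UnitsSet

section Walks

variable {Q : Type*} [Group Q]

theorem exists_walk_length_le_one_of_commute {u v : Q} (hu : u ≠ 1) (hv : v ≠ 1)
    (h : Commute u v) : ∃ p : (commGraph Q).Walk u v, p.length ≤ 1 := by
  by_cases he : u = v
  · subst he
    exact ⟨.nil, by simp⟩
  · exact ⟨.cons (show (commGraph Q).Adj u v from ⟨he, hu, hv, h⟩) .nil, by simp⟩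

theorem not_distGT_four_of_commute_chain {u x y z v : Q} (hu : u ≠ 1) (hx : x ≠ 1)
    (hy : y ≠ 1) (hz : z ≠ 1) (hv : v ≠ 1) (hux : Commute u x) (hxy : Commute x y)
    (hyz : Commute y z) (hzv : Commute z v) : ¬ distGT (commGraph Q) u v 4 := by
  intro hd
  obtain ⟨p₁, h₁⟩ := exists_walk_length_le_one_of_commute hu hx hux
  obtain ⟨p₂, h₂⟩ := exists_walk_length_le_one_of_commute hx hy hxy
  obtain ⟨p₃, h₃⟩ := exists_walk_length_le_one_of_commute hy hz hyz
  obtain ⟨p₄, h₄⟩ := exists_walk_length_le_one_of_commute hz hv hzv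
  have := hd (p₁.append (p₂.append (p₃.append p₄)))
  simp only [SimpleGraph.Walk.length_append] at this
  omega

end Walks

section Classes

variable {D : Type*} [DivisionRing D] {N : Subgroup Dˣ} [N.Normal]

variable (N) in
/-- The image `x*` of `x` in `G* = Dˣ ⧸ N`, with the junk value `0* = 1`. -/
noncomputable def cls (x : D) : Dˣ ⧸ N :=
  open Classical in if hx : x = 0 then 1 else QuotientGroup.mk (Units.mk0 x hx)

theorem cls_zero : cls N (0 : D) = 1 := dif_pos rfl

theorem cls_of_ne_zero {x : D} (hx : x ≠ 0) : cls N x = QuotientGroup.mk (Units.mk0 x hx) :=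
  dif_neg hx

theorem cls_coe (u : Dˣ) : cls N (u : D) = QuotientGroup.mk u := by
  rw [cls_of_ne_zero u.ne_zero, Units.mk0_val]

theorem cls_ne_one {x : D} (hx₀ : x ≠ 0) (hx : x ∉ unitsSet N) : cls N x ≠ 1 := by
  rw [cls_of_ne_zero hx₀, Ne, QuotientGroup.eq_one_iff]
  exact fun h => hx ⟨_, h, rfl⟩

theorem cls_neg (hneg : (-1 : Dˣ) ∈ N) (x : D) : cls N (-x) = cls N x := by
  rcases eq_or_ne x 0 with rfl | hx
  · rw [neg_zero]
  rw [cls_of_ne_zero hx, cls_of_ne_zero (neg_ne_zero.mpr hx),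
    show Units.mk0 (-x) _ = -1 * Units.mk0 x hx from Units.ext (by simp), QuotientGroup.mk_mul,
    (QuotientGroup.eq_one_iff _).mpr hneg, one_mul]

/-- If `x = y + u` with `u ∈ N`, then `x u⁻¹ y = y u⁻¹ y + y = y u⁻¹ x`. -/
theorem commute_cls_of_sub_mem {x y : D} (h : x - y ∈ unitsSet N) :
    Commute (cls N x) (cls N y) := by
  rcases eq_or_ne x 0 with rfl | hx
  · rw [cls_zero]; exact Commute.one_left _
  rcases eq_or_ne y 0 with rfl | hy
  · rw [cls_zero]; exact Commute.one_right _
  obtain ⟨u, hu, hxy⟩ := h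
  have hmul :
      Units.mk0 x hx * u⁻¹ * Units.mk0 y hy = Units.mk0 y hy * u⁻¹ * Units.mk0 x hx := by
    simp only [Units.ext_iff, Units.val_mul, Units.val_mk0, Units.val_inv_eq_inv_val]
    rw [show x = y + u by rw [hxy]; abel]
    simp [add_mul, mul_add, mul_assoc, u.ne_zero]
  have hq := congrArg (QuotientGroup.mk : Dˣ → Dˣ ⧸ N) hmul
  simp only [QuotientGroup.mk_mul, (QuotientGroup.eq_one_iff _).mpr (inv_mem hu), mul_one] at hq
  rw [cls_of_ne_zero hx, cls_of_ne_zero hy]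
  exact hq

end Classes

section Chains

variable {D : Type*} [DivisionRing D] {N : Subgroup Dˣ} [N.Normal]

theorem cls_ne_one_of_sub_mem (hneg : (-1 : Dˣ) ∈ N) {x y : D} (hx : x ∉ unitsSet N)
    (hy : y ∉ unitsSet N) (h : x - y ∈ unitsSet N) : cls N x ≠ 1 :=
  cls_ne_one (fun hx₀ => hy (by simpa [hx₀] using neg_mem_unitsSet hneg h)) hx

theorem not_distGT_four_of_sub_mem_chain (hneg : (-1 : Dˣ) ∈ N) {u x y z v : D}
    (hu : u ∉ unitsSet N) (hx : x ∉ unitsSet N) (hy : y ∉ unitsSet N) (hz : z ∉ unitsSet N)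
    (hv : v ∉ unitsSet N) (hux : x - u ∈ unitsSet N) (hxy : y - x ∈ unitsSet N)
    (hyz : z - y ∈ unitsSet N) (hzv : v - z ∈ unitsSet N) :
    ¬ distGT (commGraph (Dˣ ⧸ N)) (cls N u) (cls N v) 4 :=
  not_distGT_four_of_commute_chain
    (cls_ne_one_of_sub_mem hneg hu hx (by simpa using neg_mem_unitsSet hneg hux))
    (cls_ne_one_of_sub_mem hneg hx hu hux) (cls_ne_one_of_sub_mem hneg hy hx hxy)
    (cls_ne_one_of_sub_mem hneg hz hy hyz) (cls_ne_one_of_sub_mem hneg hv hz hzv)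
    (commute_cls_of_sub_mem hux).symm (commute_cls_of_sub_mem hxy).symm
    (commute_cls_of_sub_mem hyz).symm (commute_cls_of_sub_mem hzv).symm

theorem not_distGT_four_of_sub_mem_chain₂ (hneg : (-1 : Dˣ) ∈ N) {u x v : D}
    (hu : u ∉ unitsSet N) (hx : x ∉ unitsSet N) (hv : v ∉ unitsSet N)
    (hux : x - u ∈ unitsSet N) (hxv : v - x ∈ unitsSet N) :
    ¬ distGT (commGraph (Dˣ ⧸ N)) (cls N u) (cls N v) 4 :=
  have hx₁ := cls_ne_one_of_sub_mem hneg hx hu hux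
  not_distGT_four_of_commute_chain
    (cls_ne_one_of_sub_mem hneg hu hx (by simpa using neg_mem_unitsSet hneg hux))
    hx₁ hx₁ hx₁ (cls_ne_one_of_sub_mem hneg hv hx hxv)
    (commute_cls_of_sub_mem hux).symm (.refl _) (.refl _) (commute_cls_of_sub_mem hxv).symm

end Chains

section

variable {D : Type*} [DivisionRing D] {N : Subgroup Dˣ} [N.Normal] {a b m n : D}

variable (N) in
structure FarPair (a b : D) : Prop where
  notMem_left : a ∉ unitsSet N
  notMem_right : b ∉ unitsSet N
  distGT_four : distGT (commGraph (Dˣ ⧸ N)) (cls N a) (cls N b) 4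
  nSet_subset : nSet N a ⊆ nSet N b

namespace FarPair

theorem neg_mem_nSet (h : FarPair N a b) (hneg : (-1 : Dˣ) ∈ N) (hm : m ∈ nSet N a) :
    -m ∈ nSet N b := by
  refine ⟨neg_mem_unitsSet hneg hm.1, by_contra fun hc => ?_⟩
  refine not_distGT_four_of_sub_mem_chain₂ hneg h.notMem_left hc h.notMem_right ?_ ?_
    h.distGT_four
  · convert sub_sub_mem_of_mem_nSet hneg h.nSet_subset hm using 1; abel
  · convert hm.1 using 1; abel

theorem add_add_mem (h : FarPair N a b) (hneg : (-1 : Dˣ) ∈ N) (hm : m ∈ nSet N a) :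
    a + b + m ∈ unitsSet N := by
  by_contra hc
  refine not_distGT_four_of_sub_mem_chain₂ hneg h.notMem_left hc h.notMem_right ?_ ?_
    h.distGT_four
  · convert (h.nSet_subset hm).2 using 1; abel
  · convert neg_mem_unitsSet hneg hm.2 using 1; abel

theorem add_notMem (h : FarPair N a b) (hn : n ∈ unitsSet N) (hbn : b + n ∉ unitsSet N) :
    a + n ∉ unitsSet N :=
  fun han => hbn (h.nSet_subset ⟨hn, han⟩).2

theorem sub_notMem (h : FarPair N a b) (hneg : (-1 : Dˣ) ∈ N) (hn : n ∈ unitsSet N)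
    (hbn : b + n ∉ unitsSet N) : a - n ∉ unitsSet N := by
  intro hc
  have hna : n - a ∈ nSet N a :=
    ⟨by simpa using neg_mem_unitsSet hneg hc, by simpa using hn⟩
  refine not_distGT_four_of_sub_mem_chain₂ hneg h.notMem_left hbn h.notMem_right ?_ ?_
    h.distGT_four
  · convert (h.nSet_subset hna).2 using 1; abel
  · convert neg_mem_unitsSet hneg hn using 1; abel

theorem mem_nSet_add_left (h : FarPair N a b) (hneg : (-1 : Dˣ) ∈ N) (hn : n ∈ unitsSet N)
    (hbn : b + n ∉ unitsSet N) (hm : m ∈ nSet N a) : m ∈ nSet N (a + n) := by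
  refine ⟨hm.1, by_contra fun hc => ?_⟩
  refine not_distGT_four_of_sub_mem_chain hneg h.notMem_left (h.add_notMem hn hbn) hc hbn
    h.notMem_right ?_ ?_ ?_ ?_ h.distGT_four
  · convert hn using 1; abel
  · convert hm.1 using 1; abel
  · convert sub_sub_mem_of_mem_nSet hneg h.nSet_subset hm using 1; abel
  · convert neg_mem_unitsSet hneg hn using 1; abel

theorem neg_mem_nSet_add_right (h : FarPair N a b) (hneg : (-1 : Dˣ) ∈ N)
    (hn : n ∈ unitsSet N) (hbn : b + n ∉ unitsSet N) (hm : m ∈ nSet N a) :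
    -m ∈ nSet N (b + n) := by
  refine ⟨neg_mem_unitsSet hneg hm.1, by_contra fun hc => ?_⟩
  refine not_distGT_four_of_sub_mem_chain hneg h.notMem_left (h.add_notMem hn hbn) hc hbn
    h.notMem_right ?_ ?_ ?_ ?_ h.distGT_four
  · convert hn using 1; abel
  · convert sub_sub_mem_of_mem_nSet hneg h.nSet_subset hm using 1; abel
  · convert hm.1 using 1; abel
  · convert neg_mem_unitsSet hneg hn using 1; abel

/-- Here the chain starts at `-a`, whose class is `a*`. -/
theorem mem_nSet_add_right (h : FarPair N a b) (hneg : (-1 : Dˣ) ∈ N) (hn : n ∈ unitsSet N)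
    (hbn : b + n ∉ unitsSet N) (hm : m ∈ nSet N a) : m ∈ nSet N (b + n) := by
  refine ⟨hm.1, by_contra fun hc => ?_⟩
  have hna : n - a ∉ unitsSet N := by
    rw [← neg_sub, neg_mem_unitsSet_iff hneg]
    exact h.sub_notMem hneg hn hbn
  refine not_distGT_four_of_sub_mem_chain hneg
    (mt (neg_mem_unitsSet_iff hneg).mp h.notMem_left) hna hc hbn
    h.notMem_right ?_ ?_ ?_ ?_ (by rw [cls_neg hneg]; exact h.distGT_four)
  · convert hn using 1; abel
  · convert h.add_add_mem hneg hm using 1; abel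
  · convert neg_mem_unitsSet hneg hm.1 using 1; abel
  · convert neg_mem_unitsSet hneg hn using 1; abel

end FarPair

end

theorem stmt_6_general {D : Type*} [DivisionRing D] (N : Subgroup Dˣ)
    [N.Normal] (hF : ∀ x : Dˣ, (x : D) ∈ Set.center D → x ∈ N)
    (a b : Dˣ) (ha : a ∉ N) (hb : b ∉ N)
    (hd : distGT (commGraph (Dˣ ⧸ N)) (QuotientGroup.mk a) (QuotientGroup.mk b) 4)
    (hsub : nSet N (a : D) ⊆ nSet N (b : D)) :
    -- (1)
    ((1 : D) ∈ nSet N (a : D) →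
      (1 : D) ∈ nSet N (b : D) ∧ (-1 : D) ∈ nSet N (b : D)) ∧
    -- (2)
    (∀ n ∈ unitsSet N \ nSet N (b : D),
      nSet N (a : D) ⊆ nSet N ((a : D) + n) ∧
      (Neg.neg '' nSet N (a : D)) ⊆ nSet N ((b : D) + n) ∧
      nSet N (a : D) ⊆ nSet N ((b : D) + n)) := by
  have hneg := neg_one_mem_of_forall_center_mem N hF
  have hab : FarPair N (a : D) b :=
    ⟨mt (coe_mem_unitsSet_iff N).mp ha, mt (coe_mem_unitsSet_iff N).mp hb,
      by rwa [cls_coe, cls_coe], hsub⟩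
  refine ⟨fun h₁ => ⟨hsub h₁, hab.neg_mem_nSet hneg h₁⟩, fun n ⟨hn, hnb⟩ => ?_⟩
  have hbn : (b : D) + n ∉ unitsSet N := fun hbn => hnb ⟨hn, hbn⟩
  refine ⟨fun _ => hab.mem_nSet_add_left hneg hn hbn, ?_,
    fun _ => hab.mem_nSet_add_right hneg hn hbn⟩
  rintro _ ⟨m, hm, rfl⟩
  exact hab.neg_mem_nSet_add_right hneg hn hbn hm

/-- Let `a, b ∈ G∖N` with `d(a*, b*) > 4` and `N(a) ⊆ N(b)`.
Then: (1) if `1 ∈ N(a)` then `1, −1 ∈ N(b)`; (2) for every `n ∈ N∖N(b)`,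
`N(a) ⊆ N(a + n)`, `−N(a) ⊆ N(b + n)` and `N(a) ⊆ N(b + n)`. -/
theorem stmt_6 {D : Type*} [DivisionRing D] [Infinite D] (N : Subgroup Dˣ)
    [N.Normal] (hF : ∀ x : Dˣ, (x : D) ∈ Set.center D → x ∈ N)
    (hfin : Finite (Dˣ ⧸ N))
    (a b : Dˣ) (ha : a ∉ N) (hb : b ∉ N)
    (hd : distGT (commGraph (Dˣ ⧸ N)) (QuotientGroup.mk a) (QuotientGroup.mk b) 4)
    (hsub : nSet N (a : D) ⊆ nSet N (b : D)) :
    -- (1)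
    ((1 : D) ∈ nSet N (a : D) →
      (1 : D) ∈ nSet N (b : D) ∧ (-1 : D) ∈ nSet N (b : D)) ∧
    -- (2)
    (∀ n ∈ unitsSet N \ nSet N (b : D),
      nSet N (a : D) ⊆ nSet N ((a : D) + n) ∧
      (Neg.neg '' nSet N (a : D)) ⊆ nSet N ((b : D) + n) ∧
      nSet N (a : D) ⊆ nSet N ((b : D) + n)) :=
  stmt_6_general N hF a b ha hb hd hsub
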